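/- arXiv:1401.4428 — 2 statements merged into one kernel-verified Lean document; each statement's English description precedes it below -/
import Mathlib

section
/- Let n ≥ 1, α₀ > 0, and r > 1 satisfy r + 1/r = 2 + α₀. On the cycle graph with 2n+2 vertices {0,…,2n+1}, define G(i,j) = (r^{n+1−d} + r^{−(n+1−d)}) / ((r − 1/r)(r^{n+1} − r^{−(n+1)})), where d = min{|i−j|, 2n+2−|i−j|} is the cycle distance. Then (2+α₀)G(i,j) − G(i+1,j) − G(i−1,j) = δ_{ij} for all i, j (indices mod 2n+2); i.e., G is the Green's function of the uniform-absorption diffusion equation on the cycle. -/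
lemma cyc_interior (α₀ r C : ℝ) (hr : r ≠ 0) (hre : r + 1 / r = 2 + α₀)
    (e b c : ℤ) (hb : b = e - 1) (hc : c = e + 1) :
    (2 + α₀) * ((r ^ e + r ^ (-e)) / C) - (r ^ b + r ^ (-b)) / C
      - (r ^ c + r ^ (-c)) / C = 0 := by
  subst hb hc
  rw [← mul_div_assoc, div_sub_div_same, div_sub_div_same, div_eq_zero_iff]
  left
  rw [← hre]
  have hx : r ^ e ≠ 0 := zpow_ne_zero e hr
  have h1 : r ^ (e - 1) = r ^ e / r := by rw [zpow_sub₀ hr, zpow_one]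
  have h2 : r ^ (-(e - 1)) = r / r ^ e := by
    rw [neg_sub, zpow_sub₀ hr, zpow_one]
  have h3 : r ^ (e + 1) = r ^ e * r := by rw [zpow_add₀ hr, zpow_one]
  have h4 : r ^ (-(e + 1)) = 1 / (r ^ e * r) := by
    rw [zpow_neg, h3, one_div]
  have h5 : r ^ (-e) = 1 / r ^ e := by rw [zpow_neg, one_div]
  rw [h1, h2, h3, h4, h5]
  field_simp
  ring

lemma cyc_interior' (α₀ r C : ℝ) (hr : r ≠ 0) (hre : r + 1 / r = 2 + α₀)
    (e b c : ℤ) (hb : b = e + 1) (hc : c = e - 1) :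
    (2 + α₀) * ((r ^ e + r ^ (-e)) / C) - (r ^ b + r ^ (-b)) / C
      - (r ^ c + r ^ (-c)) / C = 0 := by
  have := cyc_interior α₀ r C hr hre e c b hc hb
  linarith

lemma cyc_anti (α₀ r C : ℝ) (hr : r ≠ 0) (hre : r + 1 / r = 2 + α₀)
    (e b c : ℤ) (he : e = 0) (hb : b = 1) (hc : c = 1) :
    (2 + α₀) * ((r ^ e + r ^ (-e)) / C) - (r ^ b + r ^ (-b)) / C
      - (r ^ c + r ^ (-c)) / C = 0 := by
  subst he hb hc
  rw [← mul_div_assoc, div_sub_div_same, div_sub_div_same, div_eq_zero_iff]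
  left
  rw [← hre]
  norm_num [zpow_one]
  field_simp
  ring

lemma cyc_diag (α₀ r : ℝ) (hr : 1 < r) (hre : r + 1 / r = 2 + α₀) (n : ℕ)
    (e b c : ℤ) (he : e = (n : ℤ) + 1) (hb : b = (n : ℤ)) (hc : c = (n : ℤ)) :
    (2 + α₀) * ((r ^ e + r ^ (-e)) /
        ((r - 1 / r) * (r ^ ((n : ℤ) + 1) - r ^ (-((n : ℤ) + 1)))))
      - (r ^ b + r ^ (-b)) /
        ((r - 1 / r) * (r ^ ((n : ℤ) + 1) - r ^ (-((n : ℤ) + 1))))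
      - (r ^ c + r ^ (-c)) /
        ((r - 1 / r) * (r ^ ((n : ℤ) + 1) - r ^ (-((n : ℤ) + 1)))) = 1 := by
  have hr0 : (0 : ℝ) < r := lt_trans one_pos hr
  have hrne : r ≠ 0 := hr0.ne'
  subst he hb hc
  set E : ℤ := (n : ℤ) + 1 with hE
  have hC1 : 0 < r - 1 / r := by
    have : 1 / r < 1 := by
      rw [div_lt_one hr0]; exact hr
    linarith
  have hC2 : 0 < r ^ E - r ^ (-E) := by
    have h1 : (1:ℝ) < r ^ E := one_lt_zpow₀ hr (show (0:ℤ) < E by rw [hE]; positivity)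
    have h2 : r ^ (-E) < 1 := by
      rw [zpow_neg]
      exact inv_lt_one_of_one_lt₀ h1
    linarith
  have hC : (r - 1 / r) * (r ^ E - r ^ (-E)) ≠ 0 := by positivity
  rw [← mul_div_assoc, div_sub_div_same, div_sub_div_same, div_eq_one_iff_eq hC]
  rw [← hre]
  have hx : r ^ E ≠ 0 := zpow_ne_zero E hrne
  have h1 : r ^ (n:ℤ) = r ^ E / r := by rw [hE, zpow_add₀ hrne, zpow_one]; field_simp
  have h2 : r ^ (-(n:ℤ)) = r / r ^ E := by
    rw [zpow_neg, h1]; field_simp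
  have h5 : r ^ (-E) = 1 / r ^ E := by rw [zpow_neg, one_div]
  rw [h1, h2, h5]
  field_simp
  ring

/-- The Green's function of the uniform-absorption diffusion equation on the
cycle with 2n+2 vertices. -/
theorem stmt_9 (n : ℕ) (hn : 1 ≤ n) (α₀ r : ℝ)
    (hα : 0 < α₀) (hr : 1 < r) (hre : r + 1 / r = 2 + α₀)
    (G : ZMod (2 * n + 2) → ZMod (2 * n + 2) → ℝ)
    (hG : ∀ i j : ZMod (2 * n + 2),
      G i j = (r ^ ((n : ℤ) + 1 - (min (i - j).val (2 * n + 2 - (i - j).val) : ℤ)) +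
          r ^ (-((n : ℤ) + 1 - (min (i - j).val (2 * n + 2 - (i - j).val) : ℤ)))) /
        ((r - 1 / r) * (r ^ ((n : ℤ) + 1) - r ^ (-((n : ℤ) + 1))))) :
    ∀ i j : ZMod (2 * n + 2),
      (2 + α₀) * G i j - G (i + 1) j - G (i - 1) j = if i = j then 1 else 0 := by
  have hrne : r ≠ 0 := (lt_trans one_pos hr).ne'
  haveI : NeZero (2 * n + 2) := ⟨by omega⟩
  haveI : Fact (1 < 2 * n + 2) := ⟨by omega⟩
  intro i j
  have h1 : i + 1 - j = (i - j) + 1 := by ring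
  have h2 : i - 1 - j = (i - j) - 1 := by ring
  rw [hG i j, hG (i + 1) j, hG (i - 1) j, h1, h2]
  set k := i - j with hk
  set m := k.val with hm
  have hmlt : m < 2 * n + 2 := ZMod.val_lt k
  have hij : i = j ↔ m = 0 := by
    rw [hm, ZMod.val_eq_zero, hk, sub_eq_zero]
  have hval1 : (k + 1).val = (m + 1) % (2 * n + 2) := by
    rw [ZMod.val_add, ZMod.val_one]
  have hm1 : k - 1 = k + ((2 * n + 1 : ℕ) : ZMod (2 * n + 2)) := by
    have h := ZMod.natCast_self (2 * n + 2)
    push_cast at h ⊢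
    linear_combination -h
  have hval2 : (k - 1).val = (m + (2 * n + 1)) % (2 * n + 2) := by
    rw [hm1, ZMod.val_add, ZMod.val_cast_of_lt (by omega)]
  by_cases h0 : m = 0
  · -- diagonal
    rw [if_pos (hij.mpr h0)]
    have e1 : (k + 1).val = 1 := by
      rw [hval1, h0, Nat.mod_eq_of_lt (by omega)]
    have e2 : (k - 1).val = 2 * n + 1 := by
      rw [hval2, h0, Nat.mod_eq_of_lt (by omega)]
      omega
    rw [e1, e2]
    exact cyc_diag α₀ r hr hre n _ _ _ (by omega) (by omega) (by omega)
  rw [if_neg (fun h => h0 (hij.mp h))]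
  by_cases hA : m = n + 1
  · -- antipode
    have e1 : (k + 1).val = n + 2 := by
      rw [hval1, hA, Nat.mod_eq_of_lt (by omega)]
    have e2 : (k - 1).val = n := by
      rw [hval2, hA, show n + 1 + (2 * n + 1) = (2 * n + 2) + n by ring,
        Nat.add_mod_left, Nat.mod_eq_of_lt (by omega)]
    rw [e1, e2]
    exact cyc_anti α₀ r _ hrne hre _ _ _ (by omega) (by omega) (by omega)
  have e2 : (k - 1).val = m - 1 := by
    rw [hval2, show m + (2 * n + 1) = (2 * n + 2) + (m - 1) by omega,
      Nat.add_mod_left, Nat.mod_eq_of_lt (by omega)]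
  by_cases hle : m ≤ n
  · -- 1 ≤ m ≤ n
    have e1 : (k + 1).val = m + 1 := by
      rw [hval1, Nat.mod_eq_of_lt (by omega)]
    rw [e1, e2]
    exact cyc_interior α₀ r _ hrne hre _ _ _ (by omega) (by omega)
  · -- n + 2 ≤ m ≤ 2n + 1
    by_cases hM : m = 2 * n + 1
    · have e1 : (k + 1).val = 0 := by
        rw [hval1, hM, show 2 * n + 1 + 1 = 2 * n + 2 by ring, Nat.mod_self]
      rw [e1, e2]
      exact cyc_interior' α₀ r _ hrne hre _ _ _ (by omega) (by omega)
    · have e1 : (k + 1).val = m + 1 := by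
        rw [hval1, Nat.mod_eq_of_lt (by omega)]
      rw [e1, e2]
      exact cyc_interior' α₀ r _ hrne hre _ _ _ (by omega) (by omega)
end

section
/- Let d ≥ 2, α₀ > 0, t > 0, γ = 1/(1+t), and σ = 2 + α₀ − γ. On the complete graph K_d with one boundary pendant vertex attached to each of the d interior vertices, the Green's function for the diffusion equation with absorption α₀ and Robin parameter t satisfies: G(x,x) = σ/((σ−1)(σ−1+d)) for interior x, and G(x,y) = 1/((σ−1)(σ−1+d)) for distinct interior x, y. That is, the vector u with u(x) = σ·c at x = y and u(z) = c for interior z ≠ y (c = 1/((σ−1)(σ−1+d))), extended to boundary vertices by u(z') = γ·u(z), satisfies (d+α₀)u(x) − Σ_{w∼x} u(w) = δ_{xy} at every interior vertex x and t·u(z') + u(z') − u(z) = 0 at every boundary vertex z'. -/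
/-- The Green's function of the diffusion equation with Robin boundary conditions
on the complete graph K_d with one pendant boundary vertex attached to each
interior vertex.  Interior vertices are `Sum.inl x`, boundary vertices `Sum.inr x`. -/
theorem stmt_10 (d : ℕ) (hd : 2 ≤ d) (α₀ t : ℝ) (hα : 0 < α₀) (ht : 0 < t)
    (y : Fin d) (γ σ c : ℝ)
    (hγ : γ = 1 / (1 + t)) (hσ : σ = 2 + α₀ - γ)
    (hc : c = 1 / ((σ - 1) * (σ - 1 + d)))
    (u : Fin d ⊕ Fin d → ℝ)
    (hu_int : ∀ x : Fin d, u (Sum.inl x) = if x = y then σ * c else c)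
    (hu_bd : ∀ x : Fin d, u (Sum.inr x) = γ * u (Sum.inl x)) :
    (∀ x : Fin d,
      ((d : ℝ) + α₀) * u (Sum.inl x) -
          ((∑ w ∈ Finset.univ.erase x, u (Sum.inl w)) + u (Sum.inr x)) =
        if x = y then 1 else 0) ∧
    (∀ z : Fin d, t * u (Sum.inr z) + u (Sum.inr z) - u (Sum.inl z) = 0) := by
  have h1t : (1 : ℝ) + t ≠ 0 := by positivity
  have hγlt : γ < 1 := by
    rw [hγ]
    rw [div_lt_one (by positivity)]
    linarith
  have h1 : 0 < σ - 1 := by rw [hσ]; linarith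
  have h2 : 0 < σ - 1 + d := by
    have : (0:ℝ) ≤ (d:ℝ) := Nat.cast_nonneg d
    linarith
  have hcne : (σ - 1) * (σ - 1 + d) ≠ 0 := by positivity
  have hd1 : 1 ≤ d := le_trans (by norm_num) hd
  have hcard : ((Finset.univ.erase y).card : ℝ) = (d : ℝ) - 1 := by
    rw [Finset.card_erase_of_mem (Finset.mem_univ y), Finset.card_univ, Fintype.card_fin,
      Nat.cast_sub hd1, Nat.cast_one]
  constructor
  · intro x
    have hsum : (∑ w ∈ Finset.univ.erase x, u (Sum.inl w)) =
        ((d : ℝ) - 1) * c + (if x = y then 0 else (σ - 1) * c) := by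
      have key : ∀ w, u (Sum.inl w) = c + (if w = y then (σ - 1) * c else 0) := by
        intro w
        rw [hu_int w]
        split <;> ring
      rw [Finset.sum_congr rfl (fun w _ => key w), Finset.sum_add_distrib,
        Finset.sum_const, Finset.sum_ite_eq' (Finset.univ.erase x) y
          (fun _ => (σ - 1) * c)]
      rw [Finset.card_erase_of_mem (Finset.mem_univ x), Finset.card_univ, Fintype.card_fin]
      have hmem : y ∈ Finset.univ.erase x ↔ ¬ x = y := by
        simp [Finset.mem_erase, eq_comm]
      by_cases hxy : x = y
      · rw [if_neg (by simp [hxy, hmem]), if_pos hxy]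
        simp only [nsmul_eq_mul, Nat.cast_sub hd1, Nat.cast_one]
      · rw [if_pos (hmem.mpr hxy), if_neg hxy]
        simp only [nsmul_eq_mul, Nat.cast_sub hd1, Nat.cast_one]
    have hγ2 : γ = 2 + α₀ - σ := by linarith
    rw [hsum, hu_bd x, hu_int x]
    by_cases hxy : x = y
    · rw [if_pos hxy, if_pos hxy, if_pos hxy, hγ2, hc]
      field_simp
      ring
    · rw [if_neg hxy, if_neg hxy, if_neg hxy, hγ2]
      ring
  · intro z
    rw [hu_bd z, hγ]
    field_simp
    ring
end
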